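/- arXiv:2511.14931 — 4 statements merged into one kernel-verified Lean document; each statement's English description precedes it below -/
import Mathlib

section
/- Fix λ > 0 and a natural number M ≥ 1. Let V(f) denote the empirical variance of the finite sequence (e^{−jλ/f})_{j=0}^{M−1}. Then f²·V(f) → λ²·(M²−1)/12 as f → +∞. -/
open Filter Finset

private lemma sum_inner_aux (M : ℕ) (c lam : ℝ) :
    ∑ i ∈ Finset.range M, (c - -(i : ℝ) * lam) = (M : ℝ) * c + lam * ((M : ℝ) * ((M : ℝ) - 1) / 2) := by
  induction M with
  | zero => simp
  | succ n ih => rw [Finset.sum_range_succ, ih]; push_cast; ring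

private lemma sum_affine_sq (M : ℕ) (a b : ℝ) :
    ∑ j ∈ Finset.range M, (a + b * (j : ℝ)) ^ 2
      = (M : ℝ) * a ^ 2 + a * b * ((M : ℝ) * ((M : ℝ) - 1))
        + b ^ 2 * ((M : ℝ) * ((M : ℝ) - 1) * (2 * (M : ℝ) - 1) / 6) := by
  induction M with
  | zero => simp
  | succ n ih => rw [Finset.sum_range_succ, ih]; push_cast; ring

private lemma key_tendsto (c : ℝ) :
    Tendsto (fun f : ℝ => f * (Real.exp (c / f) - 1)) atTop (nhds c) := by
  have hd : HasDerivAt (fun t : ℝ => Real.exp (c * t)) c 0 := by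
    have h1 : HasDerivAt (fun t : ℝ => c * t) c 0 := by
      simpa using (hasDerivAt_id (0 : ℝ)).const_mul c
    simpa using h1.exp
  have hslope : Tendsto (slope (fun t : ℝ => Real.exp (c * t)) 0)
      (nhdsWithin 0 {(0 : ℝ)}ᶜ) (nhds c) := hasDerivAt_iff_tendsto_slope.mp hd
  have hinv : Tendsto (fun f : ℝ => f⁻¹) atTop (nhdsWithin 0 {(0 : ℝ)}ᶜ) := by
    rw [tendsto_nhdsWithin_iff]
    refine ⟨tendsto_inv_atTop_zero, ?_⟩
    filter_upwards [eventually_gt_atTop (0 : ℝ)] with f hf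
    simpa using inv_ne_zero hf.ne'
  have h := hslope.comp hinv
  refine h.congr fun f => ?_
  simp only [Function.comp_apply, slope_def_field, sub_zero, mul_zero, Real.exp_zero,
    div_eq_mul_inv c f]
  rw [div_eq_mul_inv, inv_inv]
  ring

/-- Fix `λ > 0` and a natural number `M ≥ 1`.  Let `V f` be the empirical
variance of the finite sequence `(e^{−jλ/f})_{j=0}^{M−1}`.  Then
`f² · V f → λ²·(M²−1)/12` as `f → +∞`. -/
theorem oversampling_variance_asymptotic (lam : ℝ) (hlam : 0 < lam) (M : ℕ) (hM : 1 ≤ M) :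
    Tendsto (fun f : ℝ =>
        f ^ 2 * ((1 / (M : ℝ)) * ∑ j ∈ Finset.range M,
          (Real.exp (-(j : ℝ) * lam / f)
            - (1 / (M : ℝ)) * ∑ i ∈ Finset.range M, Real.exp (-(i : ℝ) * lam / f)) ^ 2))
      atTop (nhds (lam ^ 2 * ((M : ℝ) ^ 2 - 1) / 12)) := by
  have hM0 : (M : ℝ) ≠ 0 := Nat.cast_ne_zero.mpr (by omega)
  have hpair : ∀ j i : ℕ,
      Tendsto (fun f : ℝ => f * (Real.exp (-(j : ℝ) * lam / f) - 1)
          - f * (Real.exp (-(i : ℝ) * lam / f) - 1)) atTop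
        (nhds (-(j : ℝ) * lam - -(i : ℝ) * lam)) :=
    fun j i => (key_tendsto _).sub (key_tendsto _)
  have hsumin : ∀ j : ℕ,
      Tendsto (fun f : ℝ => (1 / (M : ℝ)) * ∑ i ∈ Finset.range M,
          (f * (Real.exp (-(j : ℝ) * lam / f) - 1) - f * (Real.exp (-(i : ℝ) * lam / f) - 1)))
        atTop (nhds ((1 / (M : ℝ)) * ∑ i ∈ Finset.range M, (-(j : ℝ) * lam - -(i : ℝ) * lam))) :=
    fun j => (tendsto_finset_sum _ fun i _ => hpair j i).const_mul _
  have hmain : Tendsto (fun f : ℝ => (1 / (M : ℝ)) * ∑ j ∈ Finset.range M,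
        ((1 / (M : ℝ)) * ∑ i ∈ Finset.range M,
          (f * (Real.exp (-(j : ℝ) * lam / f) - 1) - f * (Real.exp (-(i : ℝ) * lam / f) - 1))) ^ 2)
      atTop (nhds ((1 / (M : ℝ)) * ∑ j ∈ Finset.range M,
        ((1 / (M : ℝ)) * ∑ i ∈ Finset.range M, (-(j : ℝ) * lam - -(i : ℝ) * lam)) ^ 2)) :=
    (tendsto_finset_sum _ fun j _ => (hsumin j).pow 2).const_mul _
  have hval : (1 / (M : ℝ)) * ∑ j ∈ Finset.range M,
      ((1 / (M : ℝ)) * ∑ i ∈ Finset.range M, (-(j : ℝ) * lam - -(i : ℝ) * lam)) ^ 2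
        = lam ^ 2 * ((M : ℝ) ^ 2 - 1) / 12 := by
    have h1 : ∀ j : ℕ, ((1 / (M : ℝ)) * ∑ i ∈ Finset.range M, (-(j : ℝ) * lam - -(i : ℝ) * lam))
        = lam * ((M : ℝ) - 1) / 2 + (-lam) * (j : ℝ) := by
      intro j
      rw [sum_inner_aux M (-(j : ℝ) * lam) lam]
      field_simp
      ring
    simp only [h1]
    rw [sum_affine_sq M (lam * ((M : ℝ) - 1) / 2) (-lam)]
    field_simp
    ring
  rw [hval] at hmain
  refine hmain.congr fun f => ?_
  have hjf : ∀ j : ℕ, (1 / (M : ℝ)) * ∑ i ∈ Finset.range M,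
      (f * (Real.exp (-(j : ℝ) * lam / f) - 1) - f * (Real.exp (-(i : ℝ) * lam / f) - 1))
        = f * (Real.exp (-(j : ℝ) * lam / f)
            - (1 / (M : ℝ)) * ∑ i ∈ Finset.range M, Real.exp (-(i : ℝ) * lam / f)) := by
    intro j
    have hterm : ∀ i ∈ Finset.range M,
        f * (Real.exp (-(j : ℝ) * lam / f) - 1) - f * (Real.exp (-(i : ℝ) * lam / f) - 1)
          = f * Real.exp (-(j : ℝ) * lam / f) - f * Real.exp (-(i : ℝ) * lam / f) := by
      intro i _; ring
    rw [Finset.sum_congr rfl hterm, Finset.sum_sub_distrib, Finset.sum_const,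
      Finset.card_range, ← Finset.mul_sum, nsmul_eq_mul]
    field_simp
  simp only [hjf]
  simp only [mul_pow]
  rw [← Finset.mul_sum]
  ring
end

section
/- Fix λ > 0 and f > 0, and set r = e^{−λ/f}, so 0 < r < 1. Let V(M) denote the empirical variance of the finite sequence (r^j)_{j=0}^{M−1}. Then M·V(M) → 1/(1−r²) = 1/(1−e^{−2λ/f}) as M → ∞. -/
open Filter

/-- Fix `λ > 0` and `f > 0`, and set `r = e^{−λ/f}`, so `0 < r < 1`.
Let `V M` be the empirical variance of the finite sequence `(r^j)_{j=0}^{M−1}`.  Then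
`M · V M → 1/(1−r²) = 1/(1−e^{−2λ/f})` as `M → ∞`. -/
theorem undersampling_variance_asymptotic (lam f : ℝ) (hlam : 0 < lam) (hf : 0 < f) :
    (0 < Real.exp (-lam / f) ∧ Real.exp (-lam / f) < 1) ∧
    Tendsto (fun M : ℕ =>
        (M : ℝ) * ((1 / (M : ℝ)) * ∑ j ∈ Finset.range M,
          (Real.exp (-lam / f) ^ j
            - (1 / (M : ℝ)) * ∑ i ∈ Finset.range M, Real.exp (-lam / f) ^ i) ^ 2))
      atTop (nhds (1 / (1 - Real.exp (-lam / f) ^ 2))) ∧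
    1 / (1 - Real.exp (-lam / f) ^ 2) = 1 / (1 - Real.exp (-2 * lam / f)) := by
  set r : ℝ := Real.exp (-lam / f) with hr
  have hr0 : 0 < r := Real.exp_pos _
  have hr1 : r < 1 := by
    rw [hr, Real.exp_lt_one_iff]
    exact div_neg_of_neg_of_pos (neg_neg_of_pos hlam) hf
  refine ⟨⟨hr0, hr1⟩, ?_, ?_⟩
  · -- main limit
    set S : ℕ → ℝ := fun M => ∑ i ∈ Finset.range M, r ^ i with hS
    have key : ∀ M : ℕ, 1 ≤ M →
        (M : ℝ) * ((1 / (M : ℝ)) * ∑ j ∈ Finset.range M,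
          (r ^ j - (1 / (M : ℝ)) * S M) ^ 2)
        = (∑ j ∈ Finset.range M, (r ^ 2) ^ j) - (S M) ^ 2 * (1 / (M : ℝ)) := by
      intro M hM
      have hM0 : (M : ℝ) ≠ 0 := by positivity
      have h1 : ∑ j ∈ Finset.range M, (r ^ j - (1 / (M : ℝ)) * S M) ^ 2
          = ∑ j ∈ Finset.range M,
            ((r ^ 2) ^ j - 2 * ((1 / (M : ℝ)) * S M) * r ^ j + ((1 / (M : ℝ)) * S M) ^ 2) := by
        refine Finset.sum_congr rfl fun j _ => ?_
        ring
      rw [h1, Finset.sum_add_distrib, Finset.sum_sub_distrib, ← Finset.mul_sum,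
        Finset.sum_const, Finset.card_range]
      simp only [nsmul_eq_mul, hS]
      field_simp
      ring
    have hEv : ∀ᶠ M : ℕ in atTop,
        (M : ℝ) * ((1 / (M : ℝ)) * ∑ j ∈ Finset.range M,
          (r ^ j - (1 / (M : ℝ)) * S M) ^ 2)
        = (∑ j ∈ Finset.range M, (r ^ 2) ^ j) - (S M) ^ 2 * (1 / (M : ℝ)) :=
      eventually_atTop.2 ⟨1, key⟩
    have h2 : Tendsto (fun M : ℕ => ∑ j ∈ Finset.range M, (r ^ 2) ^ j) atTop
        (nhds ((1 - r ^ 2)⁻¹)) := by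
      have h : r ^ 2 < 1 := by nlinarith
      exact (hasSum_geometric_of_lt_one (by positivity) h).tendsto_sum_nat
    have hSlim : Tendsto S atTop (nhds ((1 - r)⁻¹)) :=
      (hasSum_geometric_of_lt_one hr0.le hr1).tendsto_sum_nat
    have h3 : Tendsto (fun M : ℕ => (S M) ^ 2 * (1 / (M : ℝ))) atTop (nhds 0) := by
      have := (hSlim.pow 2).mul tendsto_one_div_atTop_nhds_zero_nat
      simpa using this
    have := (h2.sub h3).congr' (hEv.mono fun _ h => h.symm)
    simpa [one_div] using this
  · have : r ^ 2 = Real.exp (-2 * lam / f) := by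
      rw [sq, hr, ← Real.exp_add]
      ring_nf
    rw [this]
end

section
/- Let A > 0, M ≥ 1 a natural number, and φ a real number with sin(φ) ≠ 0 and sin(φ/2) ≠ 0. Let V denote the empirical variance of the finite sequence (A·cos(jφ))_{j=0}^{M−1}. Then |V − A²/2| ≤ A²/(2M·|sin φ|) + A²/(M²·sin²(φ/2)). -/
open Real Finset

lemma sum_cos_abs_le (θ : ℝ) (h : Real.sin (θ/2) ≠ 0) (M : ℕ) :
    |∑ j ∈ Finset.range M, Real.cos ((j:ℝ) * θ)| ≤ 1 / |Real.sin (θ/2)| := by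
  have key : ∀ j : ℕ, 2 * Real.sin (θ/2) * Real.cos ((j:ℝ)*θ)
      = Real.sin (((j:ℝ)+1)*θ - θ/2) - Real.sin ((j:ℝ)*θ - θ/2) := by
    intro j
    rw [show ((j:ℝ)+1)*θ - θ/2 = (j:ℝ)*θ + θ/2 by ring, Real.sin_add, Real.sin_sub]
    ring
  have tele : 2 * Real.sin (θ/2) * ∑ j ∈ Finset.range M, Real.cos ((j:ℝ)*θ)
      = Real.sin ((M:ℝ)*θ - θ/2) - Real.sin ((0:ℝ)*θ - θ/2) := by
    rw [Finset.mul_sum]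
    have := Finset.sum_range_sub (fun j : ℕ => Real.sin ((j:ℝ)*θ - θ/2)) M
    simp only [Nat.cast_zero] at this
    rw [← this]
    apply Finset.sum_congr rfl
    intro j _
    push_cast
    exact key j
  have habs : |2 * Real.sin (θ/2)| * |∑ j ∈ Finset.range M, Real.cos ((j:ℝ)*θ)| ≤ 2 := by
    rw [← abs_mul, tele]
    calc |Real.sin ((M:ℝ)*θ - θ/2) - Real.sin ((0:ℝ)*θ - θ/2)|
        ≤ |Real.sin ((M:ℝ)*θ - θ/2)| + |Real.sin ((0:ℝ)*θ - θ/2)| := abs_sub _ _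
      _ ≤ 1 + 1 := add_le_add (abs_le.mpr ⟨Real.neg_one_le_sin _, Real.sin_le_one _⟩) (abs_le.mpr ⟨Real.neg_one_le_sin _, Real.sin_le_one _⟩)
      _ = 2 := by norm_num
  have hpos : 0 < |Real.sin (θ/2)| := abs_pos.mpr h
  rw [le_div_iff₀ hpos]
  nlinarith [abs_nonneg (∑ j ∈ Finset.range M, Real.cos ((j:ℝ)*θ)), abs_mul (2:ℝ) (Real.sin (θ/2)), abs_two (α := ℝ)]

/-- Let `A > 0`, `M ≥ 1` a natural number, and `φ` a real number with
`sin φ ≠ 0` and `sin(φ/2) ≠ 0`.  Let `V` be the empirical variance of the finite sequence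
`(A·cos(jφ))_{j=0}^{M−1}`.  Then `|V − A²/2| ≤ A²/(2M·|sin φ|) + A²/(M²·sin²(φ/2))`. -/
theorem sho_variance_error_bound (A : ℝ) (hA : 0 < A) (M : ℕ) (hM : 1 ≤ M) (φ : ℝ)
    (hφ1 : Real.sin φ ≠ 0) (hφ2 : Real.sin (φ / 2) ≠ 0) :
    |(1 / (M : ℝ)) * ∑ j ∈ Finset.range M,
        (A * Real.cos ((j : ℝ) * φ)
          - (1 / (M : ℝ)) * ∑ i ∈ Finset.range M, A * Real.cos ((i : ℝ) * φ)) ^ 2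
      - A ^ 2 / 2|
      ≤ A ^ 2 / (2 * (M : ℝ) * |Real.sin φ|)
        + A ^ 2 / ((M : ℝ) ^ 2 * Real.sin (φ / 2) ^ 2) := by
  have hMpos : (0:ℝ) < M := by exact_mod_cast hM
  have hMne : (M:ℝ) ≠ 0 := ne_of_gt hMpos
  set S1 := ∑ j ∈ Finset.range M, Real.cos ((j:ℝ) * φ) with hS1
  set S2 := ∑ j ∈ Finset.range M, Real.cos ((j:ℝ) * (2*φ)) with hS2
  -- sum of squares of cosines
  have hsq : ∑ j ∈ Finset.range M, Real.cos ((j:ℝ)*φ)^2 = (M:ℝ)/2 + S2/2 := by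
    have : ∀ j ∈ Finset.range M, Real.cos ((j:ℝ)*φ)^2 = 1/2 + Real.cos ((j:ℝ)*(2*φ))/2 := by
      intro j _
      rw [Real.cos_sq, show 2*((j:ℝ)*φ) = (j:ℝ)*(2*φ) by ring]
    rw [Finset.sum_congr rfl this, Finset.sum_add_distrib, Finset.sum_const,
      Finset.card_range, ← Finset.sum_div]
    simp [hS2]
    ring
  -- variance formula
  have hmean : (1 / (M : ℝ)) * ∑ i ∈ Finset.range M, A * Real.cos ((i:ℝ) * φ) = A*S1/M := by
    rw [← Finset.mul_sum]; ring
  have hvar : (1 / (M : ℝ)) * ∑ j ∈ Finset.range M,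
        (A * Real.cos ((j : ℝ) * φ)
          - (1 / (M : ℝ)) * ∑ i ∈ Finset.range M, A * Real.cos ((i : ℝ) * φ)) ^ 2
      - A ^ 2 / 2 = A^2*S2/(2*M) - A^2*S1^2/M^2 := by
    have hexp : ∑ j ∈ Finset.range M,
        (A * Real.cos ((j : ℝ) * φ)
          - (1 / (M : ℝ)) * ∑ i ∈ Finset.range M, A * Real.cos ((i : ℝ) * φ)) ^ 2
        = A^2 * ((M:ℝ)/2 + S2/2) - 2*(A*S1/M)*(A*S1) + (M:ℝ)*(A*S1/M)^2 := by
      have : ∀ j ∈ Finset.range M,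
          (A * Real.cos ((j : ℝ) * φ)
            - (1 / (M : ℝ)) * ∑ i ∈ Finset.range M, A * Real.cos ((i : ℝ) * φ)) ^ 2
          = A^2 * Real.cos ((j:ℝ)*φ)^2 - (2*(A*S1/M)*A) * Real.cos ((j:ℝ)*φ) + (A*S1/M)^2 := by
        intro j _
        rw [hmean]; ring
      rw [Finset.sum_congr rfl this, Finset.sum_add_distrib, Finset.sum_sub_distrib,
        ← Finset.mul_sum, ← Finset.mul_sum, hsq, Finset.sum_const, Finset.card_range,
        nsmul_eq_mul]
      rw [← hS1]; ring
    rw [hexp]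
    field_simp
    ring
  rw [hvar]
  have hb2 : |S2| ≤ 1 / |Real.sin φ| := by
    have := sum_cos_abs_le (2*φ) (by rw [show (2*φ)/2 = φ by ring]; exact hφ1) M
    rwa [show (2*φ)/2 = φ by ring] at this
  have hb1 : |S1| ≤ 1 / |Real.sin (φ/2)| := sum_cos_abs_le φ hφ2 M
  have hbp : 0 < |Real.sin φ| := abs_pos.mpr hφ1
  have hbp2 : 0 < |Real.sin (φ/2)| := abs_pos.mpr hφ2
  have hS1sq : S1^2 ≤ 1 / Real.sin (φ/2)^2 := by
    have := sq_le_sq' (neg_le_of_abs_le hb1) (le_of_abs_le hb1)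
    calc S1^2 ≤ (1 / |Real.sin (φ/2)|)^2 := this
      _ = 1 / Real.sin (φ/2)^2 := by rw [div_pow, one_pow, sq_abs]
  calc |A^2*S2/(2*M) - A^2*S1^2/M^2| ≤ |A^2*S2/(2*M)| + |A^2*S1^2/M^2| := abs_sub _ _
    _ = A^2*|S2|/(2*M) + A^2*S1^2/M^2 := by
        rw [abs_div, abs_mul, abs_of_nonneg (sq_nonneg A),
          abs_of_pos (by positivity : (0:ℝ) < 2*(M:ℝ)),
          abs_of_nonneg (by positivity : (0:ℝ) ≤ A^2*S1^2/(M:ℝ)^2)]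
    _ ≤ A^2*(1/|Real.sin φ|)/(2*M) + A^2*(1/Real.sin (φ/2)^2)/M^2 := by
        gcongr
    _ = A ^ 2 / (2 * (M : ℝ) * |Real.sin φ|) + A ^ 2 / ((M : ℝ) ^ 2 * Real.sin (φ/2) ^ 2) := by
        field_simp
end

section
/- Let C > 0, a > 0, b > 0 be real constants and define g(α) = (1−e^{−2α})/(2α) − ((1−e^{−α})/α)² for α > 0. Define F(N) = 2 − C·ln(1 + b·g(a/N)) for N > 0. Then F is continuous on (0,∞), F(N) → 2 as N → 0⁺, and F(N) → 2 as N → +∞. Moreover, if there exists N* > 0 with F(N*) < 0, then there exist N₁ and N₂ with 0 < N₁ < N* < N₂ such that F(N₁) = 0 and F(N₂) = 0. -/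
open Filter

/-- The paper's signal-variance function for exponential decay observed over a window of
dimensionless length `α`. -/
noncomputable def g (α : ℝ) : ℝ :=
  (1 - Real.exp (-2 * α)) / (2 * α) - ((1 - Real.exp (-α)) / α) ^ 2

/-!
`g α` is the variance of `exp (-α U)` for `U` uniform on `[0, 1]`: with
`expMean α = (1 - exp (-α)) / α` the mean of `t ↦ exp (-α t)` over `[0, 1]`, one has
`g α = expMean (2α) - expMean α ^ 2`. It is nonnegative (here via the Padé-type bound
`2 - α ≤ (2 + α) exp (-α)`), and it tends to `0` both as `α → 0⁺` (both terms tend to `1`) and as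
`α → ∞`. Hence `F` is continuous on `(0, ∞)` and tends to `2` at both ends, and a negative value
`F N*` forces a zero on each side of `N*` by the intermediate value theorem.
-/

open Set Real Topology

section IntermediateValue

variable {α δ : Type*} [ConditionallyCompleteLinearOrder α] [TopologicalSpace α] [OrderTopology α]
  [DenselyOrdered α] [LinearOrder δ] [TopologicalSpace δ] [OrderClosedTopology δ]
  {f : α → δ} {x : α} {c v : δ}

theorem exists_mem_Ioo_eq_of_tendsto_nhdsGT {a : α} (hax : a < x) (hf : ContinuousOn f (Ioc a x))
    (hlim : Tendsto f (𝓝[>] a) (𝓝 v)) (hx : f x < c) (hc : c < v) :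
    ∃ y ∈ Ioo a x, f y = c := by
  have : NeBot (𝓝[>] a) := nhdsGT_neBot_of_exists_gt ⟨x, hax⟩
  obtain ⟨y, hy, rfl⟩ := isPreconnected_Ioc.intermediate_value_Ico (right_mem_Ioc.2 hax)
    (le_principal_iff.2 (Ioc_mem_nhdsGT hax)) hf hlim ⟨hx.le, hc⟩
  exact ⟨y, ⟨hy.1, hy.2.lt_of_ne (by rintro rfl; exact hx.false)⟩, rfl⟩

theorem exists_gt_eq_of_tendsto_atTop (hf : ContinuousOn f (Ici x))
    (hlim : Tendsto f atTop (𝓝 v)) (hx : f x < c) (hc : c < v) :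
    ∃ y, x < y ∧ f y = c := by
  obtain ⟨y, hy, rfl⟩ := isPreconnected_Ici.intermediate_value_Ico self_mem_Ici
    (le_principal_iff.2 (Ici_mem_atTop x)) hf hlim ⟨hx.le, hc⟩
  exact ⟨y, hy.lt_of_ne (by rintro rfl; exact hx.false), rfl⟩

end IntermediateValue

theorem two_sub_le_two_add_mul_exp_neg {x : ℝ} (hx : 0 ≤ x) : 2 - x ≤ (2 + x) * exp (-x) := by
  let f : ℝ → ℝ := fun t => (2 + t) * exp (-t) + t
  have hf : ∀ t, HasDerivAt f (1 - (1 + t) * exp (-t)) t := fun t => by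
    refine ((((hasDerivAt_id t).const_add 2).mul (hasDerivAt_neg t).exp).add
      (hasDerivAt_id t)).congr_deriv ?_
    simp only [id]
    ring
  have hmono : Monotone f := monotone_of_deriv_nonneg (fun t => (hf t).differentiableAt) fun t => by
    have : (t + 1) * exp (-t) ≤ exp t * exp (-t) :=
      mul_le_mul_of_nonneg_right (add_one_le_exp t) (exp_pos _).le
    rw [← exp_add, add_neg_cancel, exp_zero] at this
    rw [(hf t).deriv]
    linarith
  have := hmono hx
  simp only [f, add_zero, neg_zero, exp_zero, mul_one] at this
  linarith

noncomputable def expMean (α : ℝ) : ℝ := (1 - exp (-α)) / α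

theorem g_eq_expMean_two_mul_sub_sq (α : ℝ) : g α = expMean (2 * α) - expMean α ^ 2 := by
  rw [g, expMean, expMean, neg_mul]

theorem g_nonneg {α : ℝ} (hα : 0 < α) : 0 ≤ g α := by
  have hE : exp (-α) < 1 := exp_lt_one_iff.2 (neg_lt_zero.2 hα)
  have hE2 : exp (-2 * α) = exp (-α) ^ 2 := by rw [← exp_nat_mul]; ring_nf
  have hpade := two_sub_le_two_add_mul_exp_neg hα.le
  rw [g, hE2, sub_nonneg, div_pow, div_le_div_iff₀ (by positivity) (by positivity)]
  -- the gap factors as `α (1 - e^{-α}) ((2 + α) e^{-α} - (2 - α))`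
  nlinarith [mul_nonneg (mul_nonneg hα.le (sub_nonneg.2 hE.le)) (sub_nonneg.2 hpade)]

theorem continuousOn_g : ContinuousOn g (Ioi 0) := by
  unfold g
  fun_prop (disch := intro x (hx : 0 < x); positivity)

theorem tendsto_expMean_nhdsGT_zero : Tendsto expMean (𝓝[>] 0) (𝓝 1) := by
  have hderiv : HasDerivAt (fun t => 1 - exp (-t)) 1 0 := by
    simpa using ((hasDerivAt_neg (0 : ℝ)).exp).const_sub 1
  refine hderiv.tendsto_slope_zero_right.congr fun t => ?_
  simp [expMean, div_eq_inv_mul]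

theorem tendsto_expMean_atTop : Tendsto expMean atTop (𝓝 0) := by
  have hnum : Tendsto (fun t : ℝ => 1 - exp (-t)) atTop (𝓝 (1 - 0)) :=
    tendsto_const_nhds.sub (tendsto_exp_atBot.comp tendsto_neg_atTop_atBot)
  exact hnum.div_atTop tendsto_id

theorem tendsto_g_nhdsGT_zero : Tendsto g (𝓝[>] 0) (𝓝 0) := by
  have hdouble : Tendsto (2 * ·) (𝓝[>] (0 : ℝ)) (𝓝[>] 0) :=
    tendsto_iff_comap.2 (comap_mulLeft_nhdsGT_zero two_pos).ge
  have := (tendsto_expMean_nhdsGT_zero.comp hdouble).sub (tendsto_expMean_nhdsGT_zero.pow 2)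
  simpa using this.congr fun α => (g_eq_expMean_two_mul_sub_sq α).symm

theorem tendsto_g_atTop : Tendsto g atTop (𝓝 0) := by
  have hdouble : Tendsto (2 * ·) atTop (atTop : Filter ℝ) := tendsto_id.const_mul_atTop two_pos
  have := (tendsto_expMean_atTop.comp hdouble).sub (tendsto_expMean_atTop.pow 2)
  simpa using this.congr fun α => (g_eq_expMean_two_mul_sub_sq α).symm

theorem Filter.Tendsto.const_sub_mul_log_one_add {ι : Type*} {l : Filter ι} {u : ι → ℝ}
    (hu : Tendsto u l (𝓝 0)) (c C b : ℝ) :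
    Tendsto (fun i => c - C * Real.log (1 + b * u i)) l (𝓝 c) := by
  have hlog := ((hu.const_mul b).const_add 1).log (by simp)
  simpa using (hlog.const_mul C).const_sub c

theorem fixed_total_effort_two_crossovers_general (C a b : ℝ) (ha : 0 < a)
    (hb : 0 < b) (F : ℝ → ℝ) (hF : ∀ N : ℝ, F N = 2 - C * Real.log (1 + b * g (a / N))) :
    ContinuousOn F (Set.Ioi (0 : ℝ)) ∧
    Tendsto F (nhdsWithin 0 (Set.Ioi 0)) (nhds 2) ∧
    Tendsto F atTop (nhds 2) ∧
    ∀ Nstar : ℝ, 0 < Nstar → F Nstar < 0 →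
      ∃ N₁ N₂ : ℝ, 0 < N₁ ∧ N₁ < Nstar ∧ Nstar < N₂ ∧ F N₁ = 0 ∧ F N₂ = 0 := by
  obtain rfl : F = fun N => 2 - C * log (1 + b * g (a / N)) := funext hF
  have hdiv : MapsTo (a / ·) (Ioi 0) (Ioi 0) := fun N hN => div_pos ha hN
  have hcont : ContinuousOn (fun N => 2 - C * log (1 + b * g (a / N))) (Ioi 0) := by
    refine continuousOn_const.sub (continuousOn_const.mul (ContinuousOn.log ?_ fun N hN => ?_))
    · exact continuousOn_const.add (continuousOn_const.mul
        (continuousOn_g.comp (continuousOn_const.div continuousOn_id fun N hN => hN.ne') hdiv))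
    · exact (add_pos_of_pos_of_nonneg one_pos (mul_nonneg hb.le (g_nonneg (hdiv hN)))).ne'
  have hzero : Tendsto (fun N => 2 - C * log (1 + b * g (a / N))) (𝓝[>] 0) (𝓝 2) := by
    refine (tendsto_g_atTop.comp ?_).const_sub_mul_log_one_add 2 C b
    exact (tendsto_inv_nhdsGT_zero.const_mul_atTop ha).congr fun N => (div_eq_mul_inv a N).symm
  have htop : Tendsto (fun N => 2 - C * log (1 + b * g (a / N))) atTop (𝓝 2) := by
    refine (tendsto_g_nhdsGT_zero.comp ?_).const_sub_mul_log_one_add 2 C b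
    exact tendsto_nhdsWithin_iff.2 ⟨tendsto_const_nhds.div_atTop tendsto_id,
      (eventually_gt_atTop 0).mono hdiv⟩
  refine ⟨hcont, hzero, htop, fun Nstar hNstar hneg => ?_⟩
  obtain ⟨N₁, ⟨hN₁, hN₁Nstar⟩, hF₁⟩ := exists_mem_Ioo_eq_of_tendsto_nhdsGT hNstar
    (hcont.mono Ioc_subset_Ioi_self) hzero hneg two_pos
  obtain ⟨N₂, hNstarN₂, hF₂⟩ := exists_gt_eq_of_tendsto_atTop
    (hcont.mono (Ici_subset_Ioi.2 hNstar)) htop hneg two_pos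
  exact ⟨N₁, N₂, hN₁, hN₁Nstar, hNstarN₂, hF₁, hF₂⟩

/-- Fixed-total-effort scenario (Case 2, `M·N = C`):
`F(N) = 2 − C·ln(1 + b·g(a/N))` is continuous on `(0,∞)`, tends to `2` both as `N → 0⁺`
and as `N → +∞`, and if `F(N*) < 0` for some `N* > 0` then `F` has zeros `N₁ < N* < N₂`
(two crossovers). -/
theorem fixed_total_effort_two_crossovers (C a b : ℝ) (hC : 0 < C) (ha : 0 < a)
    (hb : 0 < b) (F : ℝ → ℝ) (hF : ∀ N : ℝ, F N = 2 - C * Real.log (1 + b * g (a / N))) :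
    ContinuousOn F (Set.Ioi (0 : ℝ)) ∧
    Tendsto F (nhdsWithin 0 (Set.Ioi 0)) (nhds 2) ∧
    Tendsto F atTop (nhds 2) ∧
    ∀ Nstar : ℝ, 0 < Nstar → F Nstar < 0 →
      ∃ N₁ N₂ : ℝ, 0 < N₁ ∧ N₁ < Nstar ∧ Nstar < N₂ ∧ F N₁ = 0 ∧ F N₂ = 0 :=
  fixed_total_effort_two_crossovers_general C a b ha hb F hF
end
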